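/- arXiv:1503.08548 — 5 statements merged into one kernel-verified Lean document; each statement's English description precedes it below -/
import Mathlib

section
/- If V₁(x) = Σ_{t=0}^∞ (1-p)^t {}_H P^t(x,E) for x ∉ H and V₁ = 0 on H, and if p ∫_E V₁(y) ν(dy) < 1, then the function V defined by V(x) = V₁(x) / (1 - p ∫_E V₁(y) ν(dy)) for x ∉ H and V(x) = 0 for x ∈ H satisfies the equation V(x) = 1 + p ∫_E V(y) ν(dy) + (1-p) ∫_E V(y) {}_H P(x,dy) for all x ∉ H. -/
open MeasureTheory ProbabilityTheory ENNReal

/-- The `t`-step iterate `P^t` of a transition kernel, with `P^0(x,·) = δ_x`. -/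
noncomputable def iterKernel {E : Type*} [MeasurableSpace E] (P : Kernel E E) :
    ℕ → Kernel E E
  | 0 => Kernel.id
  | t + 1 => P ∘ₖ iterKernel P t

/-- The iterates of the taboo kernel `{}_H P(x,Γ) := P(x, Γ \ H)`, given the
complement `Hᶜ` as a measurable set; `{}_H P^0(x,Γ) = δ_x(Γ \ H)`, so that
`{}_H P^0(x,E) = 1{x ∉ H}`. -/
noncomputable def tabooIter {E : Type*} [MeasurableSpace E] (P : Kernel E E)
    {Hc : Set E} (hHc : MeasurableSet Hc) : ℕ → Kernel E E
  | 0 => Kernel.id.restrict hHc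
  | t + 1 => (P.restrict hHc) ∘ₖ tabooIter P hHc t
open scoped Classical

/-!
Writing `a = 1 - p`, the function `V₁` is the taboo potential `∑ aᵗ {}_H Pᵗ(x, E)`. The
taboo iterates form a semigroup, `{}_H P^{t+1} = {}_H P^t ∘ {}_H P`, so off `H` the potential
satisfies the first-step equation `V₁ = 1 + a ∫ V₁ d({}_H P x)`, and it is finite because
`a < 1`. With `c = 1 - p ∫ V₁ dν > 0` the rescaled function `V = V₁ / c` then satisfies
`V = 1 / c + a ∫ V d({}_H P x)`, and `1 / c = 1 + p ∫ V dν`.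
-/

section TabooIter

variable {E : Type*} [MeasurableSpace E] (P : Kernel E E) {Hc : Set E} (hHc : MeasurableSet Hc)

lemma tabooIter_restrict (t : ℕ) : (tabooIter P hHc t).restrict hHc = tabooIter P hHc t := by
  obtain ⟨κ, hκ⟩ : ∃ κ : Kernel E E, tabooIter P hHc t = κ.restrict hHc := by
    cases t with
    | zero => exact ⟨Kernel.id, rfl⟩
    | succ t => exact ⟨P ∘ₖ tabooIter P hHc t, Kernel.comp_restrict hHc⟩
  ext1 x
  rw [hκ, Kernel.restrict_apply, Kernel.restrict_apply, Measure.restrict_restrict hHc,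
    Set.inter_self]

lemma tabooIter_add (s t : ℕ) :
    tabooIter P hHc (s + t) = tabooIter P hHc s ∘ₖ tabooIter P hHc t := by
  induction s with
  | zero =>
    rw [Nat.zero_add, tabooIter, Kernel.comp_restrict, Kernel.id_comp, tabooIter_restrict]
  | succ s ih =>
    rw [Nat.succ_add, tabooIter, ih, tabooIter, Kernel.comp_assoc]

lemma tabooIter_one_apply {x : E} (hx : x ∈ Hc) : tabooIter P hHc 1 x = P.restrict hHc x := by
  rw [tabooIter, Kernel.comp_apply, tabooIter, Kernel.restrict_apply, Kernel.id_apply,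
    restrict_dirac' hHc, if_pos hx, Measure.dirac_bind (Kernel.measurable _)]

lemma tabooIter_apply_eq_zero {x : E} (hx : x ∉ Hc) (t : ℕ) : tabooIter P hHc t x = 0 := by
  have h0 : tabooIter P hHc 0 x = 0 := by
    rw [tabooIter, Kernel.restrict_apply, Kernel.id_apply, restrict_dirac' hHc, if_neg hx]
  rw [← Nat.add_zero t, tabooIter_add, Kernel.comp_apply, h0, Measure.bind_zero_left]

lemma tabooIter_zero_apply_univ (x : E) : tabooIter P hHc 0 x Set.univ = Hc.indicator 1 x := by
  rw [tabooIter, Kernel.restrict_apply' _ _ _ MeasurableSet.univ, Set.univ_inter, Kernel.id_apply,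
    Measure.dirac_apply' _ hHc]

lemma tabooIter_apply_univ_le_one [IsZeroOrMarkovKernel P] (t : ℕ) (x : E) :
    tabooIter P hHc t x Set.univ ≤ 1 := by
  induction t generalizing x with
  | zero =>
    rw [tabooIter_zero_apply_univ]
    exact Set.indicator_le_self' (fun _ _ => zero_le_one) x
  | succ t ih =>
    rw [tabooIter, Kernel.comp_apply' _ _ _ MeasurableSet.univ]
    calc ∫⁻ y, P.restrict hHc y Set.univ ∂(tabooIter P hHc t x)
        ≤ ∫⁻ _, 1 ∂(tabooIter P hHc t x) := lintegral_mono fun y =>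
          (Kernel.restrict_apply' _ _ _ MeasurableSet.univ).trans_le prob_le_one
      _ ≤ 1 := by rw [lintegral_one]; exact ih x

end TabooIter

section TabooPotential

variable {E : Type*} [MeasurableSpace E] (P : Kernel E E) {Hc : Set E} (hHc : MeasurableSet Hc)

/-- `V₁ = (tabooPotential P hH.compl (ofReal (1 - p))).toReal`; summing in `ℝ≥0∞` makes the
series meaningful before its finiteness is known. -/
noncomputable def tabooPotential (a : ℝ≥0∞) (x : E) : ℝ≥0∞ :=
  ∑' t : ℕ, a ^ t * tabooIter P hHc t x Set.univ

lemma measurable_tabooPotential (a : ℝ≥0∞) : Measurable (tabooPotential P hHc a) :=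
  Measurable.tsum fun _ => (Kernel.measurable_coe _ MeasurableSet.univ).const_mul _

lemma tabooPotential_eq_zero {x : E} (hx : x ∉ Hc) (a : ℝ≥0∞) :
    tabooPotential P hHc a x = 0 := by
  simp [tabooPotential, tabooIter_apply_eq_zero P hHc hx]

lemma tabooPotential_eq_indicator_add (a : ℝ≥0∞) (x : E) :
    tabooPotential P hHc a x =
      Hc.indicator 1 x + a * ∫⁻ y, tabooPotential P hHc a y ∂(tabooIter P hHc 1 x) := by
  have hmeas (t : ℕ) : Measurable fun y => a ^ t * tabooIter P hHc t y Set.univ :=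
    (Kernel.measurable_coe _ MeasurableSet.univ).const_mul _
  unfold tabooPotential
  rw [tsum_eq_zero_add' ENNReal.summable, pow_zero, one_mul,
    tabooIter_zero_apply_univ, lintegral_tsum fun t => (hmeas t).aemeasurable,
    ← ENNReal.tsum_mul_left]
  congr 2 with t
  rw [lintegral_const_mul _ (Kernel.measurable_coe _ MeasurableSet.univ), tabooIter_add,
    Kernel.comp_apply' _ _ _ MeasurableSet.univ, pow_succ]
  ring

lemma tabooPotential_le [IsZeroOrMarkovKernel P] (a : ℝ≥0∞) (x : E) :
    tabooPotential P hHc a x ≤ (1 - a)⁻¹ :=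
  calc tabooPotential P hHc a x ≤ ∑' t : ℕ, a ^ t :=
        ENNReal.tsum_le_tsum fun t =>
          mul_le_of_le_one_right' (tabooIter_apply_univ_le_one P hHc t x)
    _ = (1 - a)⁻¹ := ENNReal.tsum_geometric a

lemma tabooPotential_lt_top [IsZeroOrMarkovKernel P] {a : ℝ≥0∞} (ha : a < 1) (x : E) :
    tabooPotential P hHc a x < ∞ :=
  (tabooPotential_le P hHc a x).trans_lt (ENNReal.inv_lt_top.2 (tsub_pos_of_lt ha))

lemma toReal_tabooPotential_ofReal [IsZeroOrMarkovKernel P] {q : ℝ} (hq : 0 ≤ q) (x : E) :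
    (tabooPotential P hHc (ENNReal.ofReal q) x).toReal =
      ∑' t : ℕ, q ^ t * (tabooIter P hHc t x Set.univ).toReal := by
  rw [tabooPotential, ENNReal.tsum_toReal_eq fun t => ENNReal.mul_ne_top
    (ENNReal.pow_ne_top ENNReal.ofReal_ne_top)
    ((tabooIter_apply_univ_le_one P hHc t x).trans_lt ENNReal.one_lt_top).ne]
  simp only [ENNReal.toReal_mul, ENNReal.toReal_pow, ENNReal.toReal_ofReal hq]

lemma toReal_tabooPotential_ofReal_eq [IsZeroOrMarkovKernel P] {q : ℝ} (hq : q ∈ Set.Ico 0 1)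
    {x : E} (hx : x ∈ Hc) :
    (tabooPotential P hHc (ENNReal.ofReal q) x).toReal =
      1 + q * ∫ y, (tabooPotential P hHc (ENNReal.ofReal q) y).toReal ∂(P.restrict hHc x) := by
  have ha : ENNReal.ofReal q < 1 := ENNReal.ofReal_lt_one.2 hq.2
  have hfin := tabooPotential_lt_top P hHc ha
  have hint : ∫⁻ y, tabooPotential P hHc (ENNReal.ofReal q) y ∂(P.restrict hHc x) ≠ ∞ := by
    refine ne_top_of_le_ne_top ?_ (lintegral_mono fun y => tabooPotential_le P hHc _ y)
    rw [lintegral_const]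
    exact ENNReal.mul_ne_top (ENNReal.inv_ne_top.2 (tsub_pos_of_lt ha).ne')
      (measure_ne_top _ _)
  rw [integral_toReal (measurable_tabooPotential P hHc _).aemeasurable (ae_of_all _ hfin),
    tabooPotential_eq_indicator_add, Set.indicator_of_mem hx, tabooIter_one_apply P hHc hx,
    Pi.one_apply, ENNReal.toReal_add ENNReal.one_ne_top
      (ENNReal.mul_ne_top ENNReal.ofReal_ne_top hint), ENNReal.toReal_mul,
    ENNReal.toReal_ofReal hq.1, ENNReal.toReal_one]

end TabooPotential

theorem stmt6_general {E : Type*} [MeasurableSpace E]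
    (P : Kernel E E) [IsMarkovKernel P]
    (ν : Measure E)
    (p : ℝ) (hp : p ∈ Set.Ioo (0 : ℝ) 1)
    (H : Set E) (hH : MeasurableSet H)
    (V₁ : E → ℝ)
    (hV₁ : ∀ x, V₁ x = if x ∈ H then 0 else
      ∑' t : ℕ, (1 - p) ^ t * (tabooIter P hH.compl t x Set.univ).toReal)
    (hlt : p * ∫ y, V₁ y ∂ν < 1)
    (V : E → ℝ)
    (hV : ∀ x, V x = if x ∈ H then 0 else V₁ x / (1 - p * ∫ y, V₁ y ∂ν)) :
    ∀ x ∉ H, V x = 1 + p * ∫ y, V y ∂ν +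
      (1 - p) * ∫ y, V y ∂((P.restrict hH.compl) x) := by
  intro x hx
  have hq : 1 - p ∈ Set.Ico (0 : ℝ) 1 := ⟨by linarith [hp.2], by linarith [hp.1]⟩
  have hV₁_eq : V₁ = fun z => (tabooPotential P hH.compl (ENNReal.ofReal (1 - p)) z).toReal := by
    funext z
    rw [hV₁ z]
    split_ifs with hz
    · rw [tabooPotential_eq_zero P hH.compl (Set.notMem_compl_iff.2 hz), ENNReal.toReal_zero]
    · rw [toReal_tabooPotential_ofReal P hH.compl hq.1]
  have hrenewal : V₁ x = 1 + (1 - p) * ∫ y, V₁ y ∂(P.restrict hH.compl x) := by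
    rw [hV₁_eq]
    exact toReal_tabooPotential_ofReal_eq P hH.compl hq hx
  have hV_eq : V = fun z => V₁ z / (1 - p * ∫ y, V₁ y ∂ν) := by
    funext z
    rw [hV z]
    split_ifs with hz
    · rw [hV₁ z, if_pos hz, zero_div]
    · rfl
  have hc : 1 - p * ∫ y, V₁ y ∂ν ≠ 0 := (sub_pos.2 hlt).ne'
  simp only [hV_eq, integral_div]
  field_simp
  linarith

/-- If `p ∫ V₁ dν < 1`, then `V(x) = V₁(x)/(1 - p ∫ V₁ dν)` for `x ∉ H`,
`V = 0` on `H`, solves `V(x) = 1 + p ∫ V dν + (1-p) ∫ V(y) {}_H P(x,dy)` for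
all `x ∉ H`. -/
theorem stmt6 {E : Type*} [MeasurableSpace E]
    (P : Kernel E E) [IsMarkovKernel P]
    (ν : Measure E) [IsProbabilityMeasure ν]
    (p : ℝ) (hp : p ∈ Set.Ioo (0 : ℝ) 1)
    (H : Set E) (hH : MeasurableSet H)
    (V₁ : E → ℝ)
    (hV₁ : ∀ x, V₁ x = if x ∈ H then 0 else
      ∑' t : ℕ, (1 - p) ^ t * (tabooIter P hH.compl t x Set.univ).toReal)
    (hlt : p * ∫ y, V₁ y ∂ν < 1)
    (V : E → ℝ)
    (hV : ∀ x, V x = if x ∈ H then 0 else V₁ x / (1 - p * ∫ y, V₁ y ∂ν)) :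
    ∀ x ∉ H, V x = 1 + p * ∫ y, V y ∂ν +
      (1 - p) * ∫ y, V y ∂((P.restrict hH.compl) x) :=
  stmt6_general P ν p hp H hH V₁ hV₁ hlt V hV
end

section
/- If q(H) > 0, where q(Γ) = ∫_E Σ_{t=0}^∞ p(1-p)^t P^t(y,Γ) ν(dy), then p ∫_E V₁(y) ν(dy) < 1, where V₁(y) = Σ_{t=0}^∞ (1-p)^t {}_H P^t(y,E) for y ∉ H and V₁ = 0 on H. In particular the geometric series Σ_{t=0}^∞ (p ∫_E V₁ dν)^t converges. -/
/-!
Since `∑ₜ p(1-p)ᵗ = 1` and every `Pᵗ` is Markov, `q` is a probability measure, so `q(H) > 0`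
gives `q(Hᶜ) < 1`. Killing the chain on `H` only loses mass, and a path that survives the taboo
up to time `t` sits in `Hᶜ` at time `t`; hence `{}_H Pᵗ(y, E) ≤ Pᵗ(y, Hᶜ)`, and integrating against
the weights `p(1-p)ᵗ` gives `p ∫ V₁ dν ≤ q(Hᶜ) < 1`.
-/

open MeasureTheory ProbabilityTheory ENNReal

section Kernels

variable {E : Type*} [MeasurableSpace E] (P : Kernel E E)

instance isMarkovKernel_iterKernel [IsMarkovKernel P] (t : ℕ) :
    IsMarkovKernel (iterKernel P t) := by
  induction t with
  | zero => exact inferInstanceAs (IsMarkovKernel Kernel.id)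
  | succ t ih => exact inferInstanceAs (IsMarkovKernel (P ∘ₖ iterKernel P t))

variable {Hc : Set E} (hHc : MeasurableSet Hc)

lemma tabooIter_le_iterKernel (t : ℕ) (x : E) : tabooIter P hHc t x ≤ iterKernel P t x := by
  induction t generalizing x with
  | zero => exact Measure.restrict_le_self
  | succ t ih =>
    refine Measure.le_iff.2 fun s hs => ?_
    change ((P.restrict hHc) ∘ₖ tabooIter P hHc t) x s ≤ (P ∘ₖ iterKernel P t) x s
    rw [Kernel.comp_apply' _ _ _ hs, Kernel.comp_apply' _ _ _ hs]
    exact lintegral_mono' (ih x) fun z => Measure.restrict_le_self s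

lemma tabooIter_apply_univ_le_iterKernel (t : ℕ) (x : E) :
    tabooIter P hHc t x Set.univ ≤ iterKernel P t x Hc := by
  cases t with
  | zero => simp [tabooIter, iterKernel, Kernel.restrict_apply]
  | succ t =>
    change ((P.restrict hHc) ∘ₖ tabooIter P hHc t) x Set.univ ≤ (P ∘ₖ iterKernel P t) x Hc
    rw [Kernel.comp_apply' _ _ _ MeasurableSet.univ, Kernel.comp_apply' _ _ _ hHc]
    refine lintegral_mono' (tabooIter_le_iterKernel P hHc t x) fun z => ?_
    simp [Kernel.restrict_apply]

end Kernels

lemma ENNReal.tsum_mul_geometric_one_sub {p : ℝ≥0∞} (hp0 : p ≠ 0) (hp1 : p ≤ 1) :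
    ∑' t : ℕ, p * (1 - p) ^ t = 1 := by
  rw [ENNReal.tsum_mul_left, ENNReal.tsum_geometric, ENNReal.sub_sub_cancel one_ne_top hp1,
    ENNReal.mul_inv_cancel hp0 (ne_top_of_le_ne_top one_ne_top hp1)]

lemma isProbabilityMeasure_of_eq_lintegral_geometric_iterKernel {E : Type*} [MeasurableSpace E]
    (P : Kernel E E) [IsMarkovKernel P] (ν : Measure E) [IsProbabilityMeasure ν]
    {p : ℝ≥0∞} (hp0 : p ≠ 0) (hp1 : p ≤ 1) (q : Measure E)
    (hq : ∀ Γ : Set E, MeasurableSet Γ →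
      q Γ = ∫⁻ y, ∑' t : ℕ, p * (1 - p) ^ t * iterKernel P t y Γ ∂ν) :
    IsProbabilityMeasure q where
  measure_univ := by
    simp [hq Set.univ MeasurableSet.univ, ENNReal.tsum_mul_geometric_one_sub hp0 hp1]

open scoped Classical

/-- If `q(H) > 0`, where `q(Γ) = ∫ Σ_t p(1-p)^t P^t(y,Γ) ν(dy)`, then
`p ∫ V₁ dν < 1`, where `V₁(y) = Σ_t (1-p)^t {}_H P^t(y,E)` for `y ∉ H` and
`V₁ = 0` on `H`; in particular the geometric series `Σ_t (p ∫ V₁ dν)^t`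
converges. -/
theorem stmt8 {E : Type*} [MeasurableSpace E]
    (P : Kernel E E) [IsMarkovKernel P]
    (ν : Measure E) [IsProbabilityMeasure ν]
    (p : ℝ≥0∞) (hp0 : 0 < p) (hp1 : p < 1)
    (H : Set E) (hH : MeasurableSet H)
    (q : Measure E)
    (hq : ∀ Γ : Set E, MeasurableSet Γ →
      q Γ = ∫⁻ y, ∑' t : ℕ, p * (1 - p) ^ t * iterKernel P t y Γ ∂ν)
    (hqH : 0 < q H)
    (V₁ : E → ℝ≥0∞)
    (hV₁ : ∀ x, V₁ x = if x ∈ H then 0 else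
      ∑' t : ℕ, (1 - p) ^ t * tabooIter P hH.compl t x Set.univ) :
    p * ∫⁻ y, V₁ y ∂ν < 1 ∧ ∑' t : ℕ, (p * ∫⁻ y, V₁ y ∂ν) ^ t < ⊤ := by
  have := isProbabilityMeasure_of_eq_lintegral_geometric_iterKernel P ν hp0.ne' hp1.le q hq
  have hqHc : q Hᶜ < 1 := by
    rw [prob_compl_eq_one_sub hH]
    exact ENNReal.sub_lt_self one_ne_top one_ne_zero hqH.ne'
  have hV₁_le : p * ∫⁻ y, V₁ y ∂ν ≤ q Hᶜ := by
    rw [hq Hᶜ hH.compl, ← lintegral_const_mul' _ _ (ne_top_of_lt hp1)]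
    refine lintegral_mono fun y => ?_
    rw [hV₁ y]
    split_ifs
    · simp
    rw [← ENNReal.tsum_mul_left]
    refine ENNReal.tsum_le_tsum fun t => ?_
    rw [← mul_assoc]
    exact mul_le_mul_right (tabooIter_apply_univ_le_iterKernel P hH.compl t y) _
  have hlt := hV₁_le.trans_lt hqHc
  exact ⟨hlt, tsum_geometric_lt_top.2 hlt⟩
end

section
/- Let μ > 0, a < b, r < a, and p ∈ (0,1). The function f(p) := (1 − e^{−μ(b−a)})^{-1} · (p(1−p) e^{−μ(a−r)p})^{-1} on (0,1) attains its global minimum at p_opt = 2 / (2 + μ(a−r) + √(4 + μ²(a−r)²)). -/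
/-!
Write `g(p) = p(1-p)e^{-cp}` with `c = μ(a-r)`; minimising `f` means maximising `g`. The point
`P = 2/(2+c+√(4+c²))` is the root in `(0,1)` of `cP² - (c+2)P + 1 = 0`, i.e. `1 - 2P = cP(1-P)`, so
the tangent line of `p(1-p)` at `P` is `P(1-P)(1 + c(p-P))`. Concavity of `p(1-p)` and
`1 + x ≤ eˣ` then give `p(1-p) ≤ P(1-P)e^{c(p-P)}` for every real `p`, which is `g(p) ≤ g(P)`.
-/

open Real

theorem mul_one_sub_mul_exp_le_of_critical {c P : ℝ} (hP₀ : 0 ≤ P) (hP₁ : P ≤ 1)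
    (hcrit : 1 - 2 * P = c * P * (1 - P)) (p : ℝ) :
    p * (1 - p) * exp (-c * p) ≤ P * (1 - P) * exp (-c * P) := by
  have hweight : 0 ≤ P * (1 - P) := mul_nonneg hP₀ (sub_nonneg.2 hP₁)
  have htangent : p * (1 - p) ≤ P * (1 - P) * (1 + c * (p - P)) := by
    have hgap : P * (1 - P) * (1 + c * (p - P)) - p * (1 - p) = (p - P) ^ 2 := by
      linear_combination (P - p) * hcrit
    linarith [sq_nonneg (p - P)]
  have hexp : P * (1 - P) * (1 + c * (p - P)) ≤ P * (1 - P) * exp (c * (p - P)) :=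
    mul_le_mul_of_nonneg_left (by linarith [add_one_le_exp (c * (p - P))]) hweight
  calc p * (1 - p) * exp (-c * p)
      ≤ P * (1 - P) * exp (c * (p - P)) * exp (-c * p) :=
        mul_le_mul_of_nonneg_right (htangent.trans hexp) (exp_pos _).le
    _ = P * (1 - P) * exp (-c * P) := by
        rw [mul_assoc, ← exp_add]; ring_nf

/-- The paper's `p_opt`, as a function of `c = μ(a - r)`. -/
noncomputable def optimalRestartProb (c : ℝ) : ℝ := 2 / (2 + c + √(4 + c ^ 2))

section optimalRestartProb

variable (c : ℝ)

theorem abs_lt_sqrt_four_add_sq : |c| < √(4 + c ^ 2) :=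
  abs_lt_of_sq_lt_sq (by rw [sq_sqrt (by positivity)]; linarith) (sqrt_nonneg _)

theorem optimalRestartProb_mem_Ioo : optimalRestartProb c ∈ Set.Ioo 0 1 := by
  have hc := abs_lt_sqrt_four_add_sq c
  have hden : 2 < 2 + c + √(4 + c ^ 2) := by linarith [neg_abs_le c]
  exact ⟨div_pos two_pos (by linarith), (div_lt_one (by linarith)).2 hden⟩

theorem one_sub_two_mul_optimalRestartProb :
    1 - 2 * optimalRestartProb c =
      c * optimalRestartProb c * (1 - optimalRestartProb c) := by
  have hs : √(4 + c ^ 2) ^ 2 = 4 + c ^ 2 := sq_sqrt (by positivity)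
  have hden : 2 + c + √(4 + c ^ 2) ≠ 0 := by
    linarith [neg_abs_le c, abs_lt_sqrt_four_add_sq c]
  unfold optimalRestartProb
  field_simp
  linear_combination hs

theorem mul_one_sub_mul_exp_le_optimalRestartProb (p : ℝ) :
    p * (1 - p) * exp (-c * p) ≤
      optimalRestartProb c * (1 - optimalRestartProb c) * exp (-c * optimalRestartProb c) :=
  have hP := optimalRestartProb_mem_Ioo c
  mul_one_sub_mul_exp_le_of_critical hP.1.le hP.2.le (one_sub_two_mul_optimalRestartProb c) p

end optimalRestartProb

theorem stmt14_general (μ a b r : ℝ) (hμ : 0 < μ) (hab : a < b) :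
    (2 / (2 + μ * (a - r) + Real.sqrt (4 + μ ^ 2 * (a - r) ^ 2))) ∈
      Set.Ioo (0 : ℝ) 1 ∧
    ∀ p ∈ Set.Ioo (0 : ℝ) 1,
      (1 - Real.exp (-μ * (b - a)))⁻¹ *
        ((2 / (2 + μ * (a - r) + Real.sqrt (4 + μ ^ 2 * (a - r) ^ 2))) *
          (1 - 2 / (2 + μ * (a - r) + Real.sqrt (4 + μ ^ 2 * (a - r) ^ 2))) *
          Real.exp (-μ * (a - r) *
            (2 / (2 + μ * (a - r) + Real.sqrt (4 + μ ^ 2 * (a - r) ^ 2)))))⁻¹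
      ≤ (1 - Real.exp (-μ * (b - a)))⁻¹ *
          (p * (1 - p) * Real.exp (-μ * (a - r) * p))⁻¹ := by
  have hprefactor : 0 ≤ (1 - exp (-μ * (b - a)))⁻¹ :=
    inv_nonneg.2 (sub_nonneg.2 (exp_le_one_iff.2 (by nlinarith)))
  have hneg : ∀ x, -μ * (a - r) * x = -(μ * (a - r)) * x := fun x => by ring
  simp only [← mul_pow, hneg]
  refine ⟨optimalRestartProb_mem_Ioo _, fun p ⟨hp₀, hp₁⟩ => ?_⟩
  have hpos : 0 < p * (1 - p) * exp (-(μ * (a - r)) * p) :=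
    mul_pos (mul_pos hp₀ (sub_pos.2 hp₁)) (exp_pos _)
  exact mul_le_mul_of_nonneg_left
    (inv_anti₀ hpos (mul_one_sub_mul_exp_le_optimalRestartProb _ p)) hprefactor

/-- For the uni-directional exponential-increment walk restarted at `r < a`,
the expected hitting time of `[a,b]` from an initial state `x > b`, namely
`f(p) = (1 - e^{-μ(b-a)})⁻¹ (p(1-p)e^{-μ(a-r)p})⁻¹`, attains its global
minimum over `p ∈ (0,1)` at
`p_opt = 2/(2 + μ(a-r) + √(4 + μ²(a-r)²))`. -/
theorem stmt14 (μ a b r : ℝ) (hμ : 0 < μ) (hab : a < b) (hr : r < a) :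
    (2 / (2 + μ * (a - r) + Real.sqrt (4 + μ ^ 2 * (a - r) ^ 2))) ∈
      Set.Ioo (0 : ℝ) 1 ∧
    ∀ p ∈ Set.Ioo (0 : ℝ) 1,
      (1 - Real.exp (-μ * (b - a)))⁻¹ *
        ((2 / (2 + μ * (a - r) + Real.sqrt (4 + μ ^ 2 * (a - r) ^ 2))) *
          (1 - 2 / (2 + μ * (a - r) + Real.sqrt (4 + μ ^ 2 * (a - r) ^ 2))) *
          Real.exp (-μ * (a - r) *
            (2 / (2 + μ * (a - r) + Real.sqrt (4 + μ ^ 2 * (a - r) ^ 2)))))⁻¹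
      ≤ (1 - Real.exp (-μ * (b - a)))⁻¹ *
          (p * (1 - p) * Real.exp (-μ * (a - r) * p))⁻¹ :=
  stmt14_general μ a b r hμ hab
end

section
/- For p ∈ (0,1) and α₁(p) = (1 − √(1−(1−p)²))/(1−p), the function g(p) := (p/α₁(p)) · α₁′(p) is strictly decreasing on (0,1), with g(p) → 0 as p → 0⁺ and g(p) → −∞ as p → 1⁻. Consequently, for each integer r ≥ 1 the equation g(p) = −1/r has a unique solution p ∈ (0,1), which is the unique maximizer of p·α₁(p)^r over (0,1). -/
open Filter Set

noncomputable def Afun (p : ℝ) : ℝ := (1 - Real.sqrt (1 - (1 - p) ^ 2)) / (1 - p)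
noncomputable def Gfun (p : ℝ) : ℝ := -Real.sqrt p / ((1 - p) * Real.sqrt (2 - p))

lemma u_pos {p : ℝ} (hp : p ∈ Set.Ioo (0:ℝ) 1) : 0 < 1 - (1 - p)^2 := by
  nlinarith [hp.1, hp.2]

lemma s_pos {p : ℝ} (hp : p ∈ Set.Ioo (0:ℝ) 1) : 0 < Real.sqrt (1 - (1 - p)^2) :=
  Real.sqrt_pos.mpr (u_pos hp)

lemma s_lt_one {p : ℝ} (hp : p ∈ Set.Ioo (0:ℝ) 1) : Real.sqrt (1 - (1 - p)^2) < 1 := by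
  have h : 1 - (1-p)^2 < 1 := by nlinarith [hp.1, hp.2]
  have := Real.sqrt_lt_sqrt (u_pos hp).le h
  simpa using this

lemma A_pos {p : ℝ} (hp : p ∈ Set.Ioo (0:ℝ) 1) : 0 < Afun p :=
  div_pos (by linarith [s_lt_one hp]) (by linarith [hp.2])

lemma aux_eq (s q : ℝ) (hq : q ≠ 0) (hs0 : s ≠ 0) (hs2 : s^2 = 1 - q^2) :
    -((1 - s)/q) / (s*q) = (-(1/(2*s)*(2*q))*q - (1-s)*(-1))/q^2 := by
  field_simp
  ring_nf
  linear_combination hs2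

lemma hasDerivAt_A {p : ℝ} (hp : p ∈ Set.Ioo (0:ℝ) 1) :
    HasDerivAt Afun (-(Afun p) / (Real.sqrt (1 - (1 - p)^2) * (1 - p))) p := by
  have hq : (1 : ℝ) - p ≠ 0 := by have := hp.2; intro h; linarith [hp.2]
  have h0 : (1 - (1-p)^2) ≠ 0 := (u_pos hp).ne'
  have h1 : HasDerivAt (fun x : ℝ => (1 - x)) (-1) p := by
    simpa using (hasDerivAt_id p).const_sub 1
  have h2 : HasDerivAt (fun x : ℝ => (1 - x)^2) ((2:ℕ)*(1-p)^(2-1)*(-1)) p := h1.pow 2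
  have hu : HasDerivAt (fun x : ℝ => 1 - (1-x)^2) (2*(1-p)) p := by
    have := (hasDerivAt_const p (1:ℝ)).sub h2
    refine this.congr_deriv ?_
    push_cast; ring
  have hs : HasDerivAt (fun x : ℝ => Real.sqrt (1 - (1-x)^2))
      (1 / (2 * Real.sqrt (1 - (1-p)^2)) * (2*(1-p))) p :=
    (Real.hasDerivAt_sqrt h0).comp p hu
  have hnum : HasDerivAt (fun x : ℝ => 1 - Real.sqrt (1 - (1-x)^2))
      (-(1 / (2 * Real.sqrt (1 - (1-p)^2)) * (2*(1-p)))) p := by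
    exact ((hasDerivAt_const p (1:ℝ)).sub hs).congr_deriv (by ring)
  have hdiv := hnum.div h1 hq
  have heq : Afun = fun x : ℝ => (1 - Real.sqrt (1 - (1-x)^2)) / (1-x) := by
    funext x; simp [Afun]
  rw [heq]
  refine hdiv.congr_deriv ?_
  have hs2 : Real.sqrt (1 - (1-p)^2) ^ 2 = 1 - (1-p)^2 :=
    Real.sq_sqrt (u_pos hp).le
  have hsne : Real.sqrt (1 - (1-p)^2) ≠ 0 := (s_pos hp).ne'
  simp only [Afun]
  exact (aux_eq _ _ hq hsne (by rw [hs2])).symm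

lemma deriv_A {p : ℝ} (hp : p ∈ Set.Ioo (0:ℝ) 1) :
    deriv Afun p = -(Afun p) / (Real.sqrt (1 - (1 - p)^2) * (1 - p)) :=
  (hasDerivAt_A hp).deriv

-- g equals Gfun on (0,1)
lemma g_eq_G {p : ℝ} (hp : p ∈ Set.Ioo (0:ℝ) 1) :
    p / Afun p * deriv Afun p = Gfun p := by
  have hq : (0:ℝ) < 1 - p := by linarith [hp.2]
  have hAne : Afun p ≠ 0 := (A_pos hp).ne'
  rw [deriv_A hp]
  have h1 : p / Afun p * (-(Afun p) / (Real.sqrt (1 - (1 - p)^2) * (1 - p)))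
      = -p / (Real.sqrt (1 - (1 - p)^2) * (1 - p)) := by
    field_simp
  rw [h1]
  have h2 : (1:ℝ) - (1-p)^2 = p * (2 - p) := by ring
  rw [h2, Real.sqrt_mul hp.1.le]
  have hsp : Real.sqrt p > 0 := Real.sqrt_pos.mpr hp.1
  have hs2p : Real.sqrt (2 - p) > 0 := Real.sqrt_pos.mpr (by linarith [hp.2])
  have hpsq : Real.sqrt p ^ 2 = p := Real.sq_sqrt hp.1.le
  rw [Gfun]
  rw [div_eq_div_iff (by positivity) (by positivity)]
  linear_combination ((1-p) * Real.sqrt (2-p)) * hpsq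

lemma G_strictAnti : StrictAntiOn Gfun (Set.Ioo 0 1) := by
  intro a ha b hb hab
  have h2a : (0:ℝ) < 2 - a := by linarith [ha.2]
  have h2b : (0:ℝ) < 2 - b := by linarith [hb.2]
  have hsa : 0 < Real.sqrt (2 - a) := Real.sqrt_pos.mpr h2a
  have hsb : 0 < Real.sqrt (2 - b) := Real.sqrt_pos.mpr h2b
  have hDa : 0 < (1 - a) * Real.sqrt (2 - a) :=
    mul_pos (by linarith [ha.2]) hsa
  have hDb : 0 < (1 - b) * Real.sqrt (2 - b) :=
    mul_pos (by linarith [hb.2]) hsb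
  have key : Real.sqrt a / ((1 - a) * Real.sqrt (2 - a))
      < Real.sqrt b / ((1 - b) * Real.sqrt (2 - b)) := by
    rw [div_lt_div_iff₀ hDa hDb]
    apply mul_lt_mul''
    · exact Real.sqrt_lt_sqrt ha.1.le hab
    · apply mul_lt_mul''
      · linarith
      · exact Real.sqrt_lt_sqrt h2b.le (by linarith)
      · linarith [hb.2]
      · exact hsb.le
    · exact Real.sqrt_nonneg a
    · exact hDb.le
  simp only [Gfun, neg_div]
  linarith

lemma G_tendsto_zero : Tendsto Gfun (nhdsWithin 0 (Set.Ioi 0)) (nhds 0) := by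
  have hc : ContinuousAt Gfun 0 := by
    apply ContinuousAt.div
    · fun_prop
    · fun_prop
    · have : 0 < Real.sqrt (2 - 0) := Real.sqrt_pos.mpr (by norm_num)
      positivity
  have h0 : Gfun 0 = 0 := by simp [Gfun]
  have := hc.continuousWithinAt (s := Set.Ioi 0)
  simpa [h0] using this.tendsto

lemma G_tendsto_atBot : Tendsto Gfun (nhdsWithin 1 (Set.Iio 1)) atBot := by
  have h1 : Tendsto (fun p : ℝ => Real.sqrt p / Real.sqrt (2 - p))
      (nhdsWithin 1 (Set.Iio 1)) (nhds 1) := by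
    have hc : ContinuousAt (fun p : ℝ => Real.sqrt p / Real.sqrt (2 - p)) 1 := by
      apply ContinuousAt.div
      · fun_prop
      · fun_prop
      · have : 0 < Real.sqrt (2 - 1) := Real.sqrt_pos.mpr (by norm_num)
        positivity
    have := hc.continuousWithinAt (s := Set.Iio 1)
    simpa [show (2:ℝ) - 1 = 1 by norm_num, Real.sqrt_one] using this.tendsto
  have h2 : Tendsto (fun p : ℝ => 1 - p) (nhdsWithin 1 (Set.Iio 1))
      (nhdsWithin 0 (Set.Ioi 0)) := by
    apply tendsto_nhdsWithin_of_tendsto_nhds_of_eventually_within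
    · have hco : Continuous (fun p : ℝ => 1 - p) := by fun_prop
      have := hco.tendsto (1:ℝ)
      simp only [sub_self] at this
      exact this.mono_left nhdsWithin_le_nhds
    · filter_upwards [self_mem_nhdsWithin] with p hp
      simp only [Set.mem_Ioi]
      have : p < 1 := hp
      linarith
  have h3 : Tendsto (fun p : ℝ => (1 - p)⁻¹) (nhdsWithin 1 (Set.Iio 1)) atTop :=
    h2.inv_tendsto_nhdsGT_zero
  have h4 : Tendsto (fun p : ℝ => Real.sqrt p / Real.sqrt (2 - p) * (1 - p)⁻¹)
      (nhdsWithin 1 (Set.Iio 1)) atTop := h1.pos_mul_atTop one_pos h3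
  have h5 : Tendsto (fun p : ℝ => -(Real.sqrt p / Real.sqrt (2 - p) * (1 - p)⁻¹))
      (nhdsWithin 1 (Set.Iio 1)) atBot := tendsto_neg_atTop_atBot.comp h4
  apply h5.congr
  intro p
  simp only [Gfun]
  rw [div_eq_mul_inv, div_eq_mul_inv, mul_inv]
  ring

lemma G_cont {x : ℝ} (hx : x ∈ Set.Ioo (0:ℝ) 1) : ContinuousAt Gfun x := by
  apply ContinuousAt.div
  · fun_prop
  · fun_prop
  · have h1 : (0:ℝ) < 1 - x := by linarith [hx.2]
    have h2 : 0 < Real.sqrt (2 - x) := Real.sqrt_pos.mpr (by linarith [hx.2])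
    positivity

lemma hasDerivAt_f {r : ℕ} (hr : 1 ≤ r) {x : ℝ} (hx : x ∈ Set.Ioo (0:ℝ) 1) :
    HasDerivAt (fun y => y * Afun y ^ r) (Afun x ^ r * (1 + r * Gfun x)) x := by
  have hd := hasDerivAt_A hx
  have h := (hasDerivAt_id x).mul (hd.pow r)
  simp only [id_eq] at h
  refine h.congr_deriv (Eq.symm ?_)
  have hAne : Afun x ≠ 0 := (A_pos hx).ne'
  have hsne : Real.sqrt (1 - (1 - x)^2) ≠ 0 := (s_pos hx).ne'
  have hqne : (1:ℝ) - x ≠ 0 := by have := hx.2; intro hcon; linarith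
  have hxD : x * (-(Afun x) / (Real.sqrt (1 - (1 - x)^2) * (1 - x)))
      = Gfun x * Afun x := by
    rw [← g_eq_G hx, deriv_A hx]
    field_simp
  have hpow : Afun x * Afun x ^ (r-1) = Afun x ^ r := by
    rw [← pow_succ', Nat.sub_add_cancel hr]
  rw [Pi.pow_apply]
  linear_combination (-(r:ℝ) * Afun x ^ (r-1)) * hxD + (-(r:ℝ) * Gfun x) * hpow

/-- With `α₁(p) = (1 - √(1-(1-p)²))/(1-p)`, the function
`g(p) = (p/α₁(p)) α₁′(p)` is strictly decreasing on `(0,1)`, with `g(p) → 0`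
as `p → 0⁺` and `g(p) → -∞` as `p → 1⁻`; consequently, for each integer
`r ≥ 1` the equation `g(p) = -1/r` has a unique solution `p₀ ∈ (0,1)`, which
is the unique maximizer of `p·α₁(p)^r` over `(0,1)`. -/
theorem stmt18 (α₁ g : ℝ → ℝ)
    (hα₁ : ∀ p : ℝ, α₁ p = (1 - Real.sqrt (1 - (1 - p) ^ 2)) / (1 - p))
    (hg : ∀ p : ℝ, g p = p / α₁ p * deriv α₁ p) :
    StrictAntiOn g (Set.Ioo 0 1) ∧
    Tendsto g (nhdsWithin 0 (Set.Ioi 0)) (nhds 0) ∧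
    Tendsto g (nhdsWithin 1 (Set.Iio 1)) atBot ∧
    ∀ r : ℕ, 1 ≤ r → ∃ p₀ ∈ Set.Ioo (0 : ℝ) 1,
      g p₀ = -1 / (r : ℝ) ∧
      (∀ p ∈ Set.Ioo (0 : ℝ) 1, g p = -1 / (r : ℝ) → p = p₀) ∧
      ∀ p ∈ Set.Ioo (0 : ℝ) 1, p ≠ p₀ → p * α₁ p ^ r < p₀ * α₁ p₀ ^ r := by
  have hAeq : α₁ = Afun := by
    funext p
    rw [hα₁ p]
    rfl
  subst hAeq
  -- g agrees with Gfun on (0,1)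
  have hgG : ∀ p ∈ Set.Ioo (0:ℝ) 1, g p = Gfun p := by
    intro p hp
    rw [hg p]
    exact g_eq_G hp
  refine ⟨?_, ?_, ?_, ?_⟩
  · -- strict anti
    intro a ha b hb hab
    rw [hgG a ha, hgG b hb]
    exact G_strictAnti ha hb hab
  · -- limit at 0⁺
    apply Tendsto.congr' _ G_tendsto_zero
    filter_upwards [Ioo_mem_nhdsGT_of_mem (show (0:ℝ) ∈ Set.Ico (0:ℝ) 1 by norm_num)]
      with p hp
    exact (hgG p hp).symm
  · -- limit at 1⁻
    apply Tendsto.congr' _ G_tendsto_atBot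
    filter_upwards [Ioo_mem_nhdsLT_of_mem (show (1:ℝ) ∈ Set.Ioc (0:ℝ) 1 by norm_num)]
      with p hp
    exact (hgG p hp).symm
  · intro r hr
    have hrpos : (0:ℝ) < (r:ℝ) := by exact_mod_cast hr
    have hlt : -1 / (r:ℝ) < 0 := by
      apply div_neg_of_neg_of_pos <;> [norm_num; exact hrpos]
    -- point a near 0 where Gfun a > -1/r
    have h1 : ∀ᶠ p in nhdsWithin (0:ℝ) (Set.Ioi 0), -1 / (r:ℝ) < Gfun p :=
      G_tendsto_zero.eventually (eventually_gt_nhds hlt)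
    have h2 : ∀ᶠ p in nhdsWithin (0:ℝ) (Set.Ioi 0), p ∈ Set.Ioo (0:ℝ) (1/2) :=
      Ioo_mem_nhdsGT_of_mem (show (0:ℝ) ∈ Set.Ico (0:ℝ) (1/2) by norm_num)
    obtain ⟨a, ha1, ha2⟩ := (h1.and h2).exists
    -- point b near 1 where Gfun b < -1/r
    have h3 : ∀ᶠ p in nhdsWithin (1:ℝ) (Set.Iio 1), Gfun p < -1 / (r:ℝ) :=
      G_tendsto_atBot.eventually (eventually_lt_atBot (-1 / (r:ℝ)))
    have h4 : ∀ᶠ p in nhdsWithin (1:ℝ) (Set.Iio 1), p ∈ Set.Ioo (1/2:ℝ) 1 :=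
      Ioo_mem_nhdsLT_of_mem (show (1:ℝ) ∈ Set.Ioc (1/2:ℝ) 1 by norm_num)
    obtain ⟨b, hb1, hb2⟩ := (h3.and h4).exists
    have hab : a < b := lt_trans ha2.2 hb2.1
    have haI : a ∈ Set.Ioo (0:ℝ) 1 := ⟨ha2.1, by linarith [ha2.2]⟩
    have hbI : b ∈ Set.Ioo (0:ℝ) 1 := ⟨by linarith [hb2.1], hb2.2⟩
    have hsub : Set.Icc a b ⊆ Set.Ioo (0:ℝ) 1 := fun x hx =>
      ⟨lt_of_lt_of_le haI.1 hx.1, lt_of_le_of_lt hx.2 hbI.2⟩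
    have hcont : ContinuousOn Gfun (Set.Icc a b) := fun x hx =>
      (G_cont (hsub hx)).continuousWithinAt
    have hIVT := intermediate_value_Icc' hab.le hcont
    have hmem : -1 / (r:ℝ) ∈ Set.Icc (Gfun b) (Gfun a) := ⟨hb1.le, ha1.le⟩
    obtain ⟨p₀, hp₀mem, hp₀val⟩ := hIVT hmem
    have hp₀I : p₀ ∈ Set.Ioo (0:ℝ) 1 := hsub hp₀mem
    refine ⟨p₀, hp₀I, by rw [hgG p₀ hp₀I]; exact hp₀val, ?_, ?_⟩
    · -- uniqueness
      intro p hpI hpval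
      apply G_strictAnti.injOn hpI hp₀I
      rw [← hgG p hpI, ← hgG p₀ hp₀I, hpval]
      rw [hgG p₀ hp₀I]
      exact hp₀val.symm
    · -- maximizer
      intro p hpI hne
      have hGp₀ : Gfun p₀ = -1 / (r:ℝ) := hp₀val
      rcases lt_or_gt_of_ne hne with hlt' | hgt'
      · -- p < p₀ : f strictly increasing on [p, p₀]
        have hmono : StrictMonoOn (fun y => y * Afun y ^ r) (Set.Icc p p₀) := by
          apply strictMonoOn_of_deriv_pos (convex_Icc p p₀)
          · intro x hx
            have hxI : x ∈ Set.Ioo (0:ℝ) 1 :=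
              ⟨lt_of_lt_of_le hpI.1 hx.1, lt_of_le_of_lt hx.2 hp₀I.2⟩
            exact ((hasDerivAt_f hr hxI).continuousAt).continuousWithinAt
          · intro x hx
            rw [interior_Icc] at hx
            have hxI : x ∈ Set.Ioo (0:ℝ) 1 :=
              ⟨lt_of_lt_of_le hpI.1 hx.1.le, lt_trans hx.2 hp₀I.2⟩
            rw [(hasDerivAt_f hr hxI).deriv]
            have hGx : Gfun p₀ < Gfun x := G_strictAnti hxI hp₀I hx.2
            have h5 : (r:ℝ) * Gfun x > (r:ℝ) * (-1 / (r:ℝ)) := by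
              apply mul_lt_mul_of_pos_left _ hrpos
              rw [← hGp₀]; exact hGx
            have h6 : (r:ℝ) * (-1 / (r:ℝ)) = -1 := by field_simp
            have h7 : 0 < 1 + (r:ℝ) * Gfun x := by rw [h6] at h5; linarith
            exact mul_pos (pow_pos (A_pos hxI) r) h7
        exact hmono ⟨le_refl p, hlt'.le⟩ ⟨hlt'.le, le_refl p₀⟩ hlt'
      · -- p₀ < p : f strictly decreasing on [p₀, p]
        have hanti : StrictAntiOn (fun y => y * Afun y ^ r) (Set.Icc p₀ p) := by
          apply strictAntiOn_of_deriv_neg (convex_Icc p₀ p)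
          · intro x hx
            have hxI : x ∈ Set.Ioo (0:ℝ) 1 :=
              ⟨lt_of_lt_of_le hp₀I.1 hx.1, lt_of_le_of_lt hx.2 hpI.2⟩
            exact ((hasDerivAt_f hr hxI).continuousAt).continuousWithinAt
          · intro x hx
            rw [interior_Icc] at hx
            have hxI : x ∈ Set.Ioo (0:ℝ) 1 :=
              ⟨lt_trans hp₀I.1 hx.1, lt_trans hx.2 hpI.2⟩
            rw [(hasDerivAt_f hr hxI).deriv]
            have hGx : Gfun x < Gfun p₀ := G_strictAnti hp₀I hxI hx.1
            have h5 : (r:ℝ) * Gfun x < (r:ℝ) * (-1 / (r:ℝ)) := by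
              apply mul_lt_mul_of_pos_left _ hrpos
              rw [← hGp₀]; exact hGx
            have h6 : (r:ℝ) * (-1 / (r:ℝ)) = -1 := by field_simp
            have h7 : 1 + (r:ℝ) * Gfun x < 0 := by rw [h6] at h5; linarith
            exact mul_neg_of_pos_of_neg (pow_pos (A_pos hxI) r) h7
        exact hanti ⟨le_refl p₀, hgt'.le⟩ ⟨hgt'.le, le_refl p⟩ hgt'
end

section
/- The equation (p/α₁(p))·α₁′(p) = −1/r, with α₁(p) = (1 − √(1−(1−p)²))/(1−p), is equivalent on (0,1) to the polynomial equation (1/r²)(1−p)²(2−p) = p, and its unique solution satisfies p_opt(r) = 2/r² − 10/r⁴ + o(r⁻⁴) as r → ∞. -/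
/-!
Writing `s = √(1 - (1 - p)²)`, one has `α₁′ = -α₁ / ((1 - p) s)`, so the equation reads
`p r = (1 - p) s`; both sides are positive, and squaring gives `p r² = (1 - p)² (2 - p)`.
For the asymptotics put `u = r² p`: the polynomial equation says `u = 2 - 5p + p²(4 - p)`,
which forces `0 ≤ u ≤ 2`, and substituting it twice into `r⁶ p - 2r⁴ + 10r²` leaves a bounded
expression in `u` and `p`. Hence `p_opt(r) - (2/r² - 10/r⁴) = O(r⁻⁶)`.
-/

open Filter Asymptotics Set

noncomputable def alphaOne (p : ℝ) : ℝ := (1 - √(1 - (1 - p) ^ 2)) / (1 - p)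

section

variable {p : ℝ} (hp : p ∈ Ioo (0 : ℝ) 1)
include hp

lemma sqrt_one_sub_one_sub_sq_mem_Ioo : √(1 - (1 - p) ^ 2) ∈ Ioo (0 : ℝ) 1 := by
  obtain ⟨hp0, hp1⟩ := hp
  constructor
  · exact Real.sqrt_pos.mpr (by nlinarith)
  · exact (Real.sqrt_lt' one_pos).mpr (by nlinarith)

lemma alphaOne_pos : 0 < alphaOne p := by
  have hs := (sqrt_one_sub_one_sub_sq_mem_Ioo hp).2
  exact div_pos (by linarith) (by linarith [hp.2])

lemma hasDerivAt_alphaOne :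
    HasDerivAt alphaOne (-alphaOne p / ((1 - p) * √(1 - (1 - p) ^ 2))) p := by
  obtain ⟨hs0, hs1⟩ := sqrt_one_sub_one_sub_sq_mem_Ioo hp
  have hq : 1 - p ≠ 0 := by linarith [hp.2]
  have hpos : 1 - (1 - p) ^ 2 ≠ 0 := by nlinarith [hp.1, hp.2]
  have hsq := Real.sq_sqrt (by nlinarith [hp.1, hp.2] : 0 ≤ 1 - (1 - p) ^ 2)
  have hinner : HasDerivAt (fun x : ℝ => 1 - (1 - x) ^ 2) (2 * (1 - p)) p := by
    simpa using (((hasDerivAt_id p).const_sub 1).pow 2).const_sub 1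
  refine (((hinner.sqrt hpos).const_sub 1).div ((hasDerivAt_id p).const_sub 1) hq).congr_deriv ?_
  simp only [alphaOne, id]
  field_simp
  linear_combination -hsq

lemma div_alphaOne_mul_deriv :
    p / alphaOne p * deriv alphaOne p = -p / ((1 - p) * √(1 - (1 - p) ^ 2)) := by
  rw [(hasDerivAt_alphaOne hp).deriv]
  field_simp [(alphaOne_pos hp).ne']

lemma neg_div_eq_neg_one_div_iff {r : ℝ} (hr : 0 < r) :
    -p / ((1 - p) * √(1 - (1 - p) ^ 2)) = -1 / r ↔ 1 / r ^ 2 * (1 - p) ^ 2 * (2 - p) = p := by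
  have hs := (sqrt_one_sub_one_sub_sq_mem_Ioo hp).1
  have hq : 0 < 1 - p := by linarith [hp.2]
  have hsq := Real.sq_sqrt (by nlinarith [hp.1, hp.2] : 0 ≤ 1 - (1 - p) ^ 2)
  calc _ ↔ p * r = (1 - p) * √(1 - (1 - p) ^ 2) := by
        rw [neg_div, neg_div, neg_inj, div_eq_div_iff (by positivity) hr.ne', one_mul]
    _ ↔ (p * r) ^ 2 = ((1 - p) * √(1 - (1 - p) ^ 2)) ^ 2 :=
        (sq_eq_sq₀ (by nlinarith [hp.1]) (by positivity)).symm
    _ ↔ p * (p * r ^ 2) = p * ((1 - p) ^ 2 * (2 - p)) := by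
        rw [mul_pow, mul_pow, hsq]
        constructor <;> intro h <;> linear_combination h
    _ ↔ _ := by
        rw [mul_right_inj' hp.1.ne', one_div_mul_eq_div, div_mul_eq_mul_div,
          div_eq_iff (by positivity), eq_comm, mul_comm]

lemma abs_pow_six_mul_sub_le_sixty_six {r : ℝ} (h : r ^ 2 * p = (1 - p) ^ 2 * (2 - p)) :
    |r ^ 6 * p - 2 * r ^ 4 + 10 * r ^ 2| ≤ 66 := by
  obtain ⟨hp0, hp1⟩ := hp
  have hE : r ^ 6 * p - 2 * r ^ 4 + 10 * r ^ 2 =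
      25 * (r ^ 2 * p) - 5 * (r ^ 2 * p) * p * (4 - p) + (r ^ 2 * p) ^ 2 * (4 - p) := by
    linear_combination (r ^ 4 - 5 * r ^ 2) * h
  have hu2 : r ^ 2 * p ≤ 2 := by nlinarith
  generalize r ^ 2 * p = u at hE hu2 h
  have hu0 : 0 ≤ u := by nlinarith
  rw [hE, abs_le]
  constructor <;> nlinarith [mul_nonneg hu0 hp0.le, mul_nonneg (mul_nonneg hu0 hp0.le) hp0.le,
    mul_nonneg hu0 hu0]

lemma abs_sub_two_div_sq_sub_ten_div_pow_four_le {r : ℝ} (hr : r ≠ 0)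
    (h : 1 / r ^ 2 * (1 - p) ^ 2 * (2 - p) = p) :
    |p - (2 / r ^ 2 - 10 / r ^ 4)| ≤ 66 * |1 / r ^ 6| := by
  have h' : r ^ 2 * p = (1 - p) ^ 2 * (2 - p) := by
    field_simp at h
    linarith
  have hdiff :
      p - (2 / r ^ 2 - 10 / r ^ 4) = (r ^ 6 * p - 2 * r ^ 4 + 10 * r ^ 2) * (1 / r ^ 6) := by
    field_simp
    ring
  rw [hdiff, abs_mul]
  exact mul_le_mul_of_nonneg_right (abs_pow_six_mul_sub_le_sixty_six hp h') (abs_nonneg _)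

end

lemma isLittleO_one_div_pow_atTop {m n : ℕ} (h : m < n) :
    (fun r : ℝ => 1 / r ^ n) =o[atTop] fun r => 1 / r ^ m := by
  simpa only [Function.comp_def, inv_pow, one_div] using
    (isLittleO_pow_pow (𝕜 := ℝ) h).comp_tendsto tendsto_inv_atTop_zero

/-- With `α₁(p) = (1 - √(1-(1-p)²))/(1-p)`, the equation
`(p/α₁(p)) α₁′(p) = -1/r` is equivalent on `(0,1)` to the polynomial equation
`(1/r²)(1-p)²(2-p) = p`, and any solution `p_opt(r) ∈ (0,1)` of the latter
satisfies `p_opt(r) = 2/r² - 10/r⁴ + o(r⁻⁴)` as `r → ∞`. -/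
theorem stmt19 (α₁ : ℝ → ℝ)
    (hα₁ : ∀ p : ℝ, α₁ p = (1 - Real.sqrt (1 - (1 - p) ^ 2)) / (1 - p))
    (popt : ℝ → ℝ)
    (hpopt : ∀ r : ℝ, 1 ≤ r → popt r ∈ Set.Ioo (0 : ℝ) 1 ∧
      (1 / r ^ 2) * (1 - popt r) ^ 2 * (2 - popt r) = popt r) :
    (∀ r : ℝ, 0 < r → ∀ p ∈ Set.Ioo (0 : ℝ) 1,
      (p / α₁ p * deriv α₁ p = -1 / r ↔
        (1 / r ^ 2) * (1 - p) ^ 2 * (2 - p) = p)) ∧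
    (fun r : ℝ => popt r - (2 / r ^ 2 - 10 / r ^ 4))
      =o[atTop] fun r : ℝ => 1 / r ^ 4 := by
  obtain rfl : α₁ = alphaOne := funext hα₁
  refine ⟨fun r hr p hp => ?_, ?_⟩
  · rw [div_alphaOne_mul_deriv hp]
    exact neg_div_eq_neg_one_div_iff hp hr
  · refine IsBigO.trans_isLittleO ?_ (isLittleO_one_div_pow_atTop (by norm_num : 4 < 6))
    refine IsBigO.of_bound 66 ?_
    filter_upwards [eventually_ge_atTop 1] with r hr
    obtain ⟨hp, h⟩ := hpopt r hr
    exact abs_sub_two_div_sq_sub_ten_div_pow_four_le hp (by positivity) h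
end
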